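/- arXiv:math/9709217 — 5 statements merged into one kernel-verified Lean document; each statement's English description precedes it below -/
import Mathlib

section
/- For every x in a real Banach space X, the function y ↦ ‖x‖y‖ + y‖ + ‖x‖y‖ − y‖ satisfies the triangle inequality: for all y₁, y₂ ∈ X, ‖y₁ + y₂‖ₓ ≤ ‖y₁‖ₓ + ‖y₂‖ₓ. -/
/-!
For fixed `x` and `y`, the function `t ↦ ‖t • x + y‖ + ‖t • x - y‖` is convex and even on `ℝ`,
hence nondecreasing in `|t|`. Since `‖y₁ + y₂‖ ≤ ‖y₁‖ + ‖y₂‖`, the left-hand side may therefore be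
evaluated at `t = ‖y₁‖ + ‖y₂‖` instead, where `t • x ± (y₁ + y₂)` splits as
`(‖y₁‖ • x ± y₁) + (‖y₂‖ • x ± y₂)` and the triangle inequality of `‖·‖` finishes.
-/

open Set

lemma ConvexOn.le_of_abs_le_of_even {f : ℝ → ℝ} (hf : ConvexOn ℝ univ f) (heven : f.Even)
    {s t : ℝ} (hst : |s| ≤ |t|) : f s ≤ f t := by
  have hs : s ∈ segment ℝ (-|t|) |t| := by
    rw [segment_eq_Icc (by simp)]
    exact abs_le.mp hst
  have habs : f |t| = f t := by
    rcases abs_choice t with h | h <;> simp only [h, heven t]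
  calc f s ≤ max (f (-|t|)) (f |t|) := hf.le_on_segment (mem_univ _) (mem_univ _) hs
    _ = f t := by rw [heven, max_self, habs]

section

variable {E : Type*} [SeminormedAddCommGroup E] [NormedSpace ℝ E]

lemma convexOn_univ_norm_smul_add (x y : E) : ConvexOn ℝ univ fun t : ℝ => ‖t • x + y‖ :=
  convexOn_univ_norm.comp_affineMap
    ((LinearMap.toSpanSingleton ℝ E x).toAffineMap + AffineMap.const ℝ ℝ y)

lemma norm_smul_add_add_norm_smul_sub_le_of_abs_le (x y : E) {s t : ℝ} (hst : |s| ≤ |t|) :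
    ‖s • x + y‖ + ‖s • x - y‖ ≤ ‖t • x + y‖ + ‖t • x - y‖ := by
  have hconvex : ConvexOn ℝ univ fun t : ℝ => ‖t • x + y‖ + ‖t • x - y‖ := by
    simp only [sub_eq_add_neg]
    exact (convexOn_univ_norm_smul_add x y).add (convexOn_univ_norm_smul_add x (-y))
  have heven : Function.Even fun t : ℝ => ‖t • x + y‖ + ‖t • x - y‖ := by
    intro t
    simp only [neg_smul]
    rw [add_comm, ← norm_neg (-(t • x) + y), ← norm_neg (-(t • x) - y)]
    congr 2 <;> abel
  exact hconvex.le_of_abs_le_of_even heven hst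

end

theorem stmt_1_general {X : Type*} [NormedAddCommGroup X] [NormedSpace ℝ X]
    (x : X) (y₁ y₂ : X) :
    ‖(‖y₁ + y₂‖ : ℝ) • x + (y₁ + y₂)‖ + ‖(‖y₁ + y₂‖ : ℝ) • x - (y₁ + y₂)‖ ≤
      (‖(‖y₁‖ : ℝ) • x + y₁‖ + ‖(‖y₁‖ : ℝ) • x - y₁‖) +
      (‖(‖y₂‖ : ℝ) • x + y₂‖ + ‖(‖y₂‖ : ℝ) • x - y₂‖) := by
  have hmono := norm_smul_add_add_norm_smul_sub_le_of_abs_le x (y₁ + y₂)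
    (s := ‖y₁ + y₂‖) (t := ‖y₁‖ + ‖y₂‖) (by
      rw [abs_of_nonneg (norm_nonneg _), abs_of_nonneg (by positivity)]
      exact norm_add_le y₁ y₂)
  have hplus : (‖y₁‖ + ‖y₂‖) • x + (y₁ + y₂) = (‖y₁‖ • x + y₁) + (‖y₂‖ • x + y₂) := by module
  have hminus : (‖y₁‖ + ‖y₂‖) • x - (y₁ + y₂) = (‖y₁‖ • x - y₁) + (‖y₂‖ • x - y₂) := by module
  rw [hplus, hminus] at hmono
  linarith [norm_add_le (‖y₁‖ • x + y₁) (‖y₂‖ • x + y₂), norm_add_le (‖y₁‖ • x - y₁) (‖y₂‖ • x - y₂)]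

theorem stmt_1 {X : Type*} [NormedAddCommGroup X] [NormedSpace ℝ X] [CompleteSpace X]
    (x : X) (y₁ y₂ : X) :
    ‖(‖y₁ + y₂‖ : ℝ) • x + (y₁ + y₂)‖ + ‖(‖y₁ + y₂‖ : ℝ) • x - (y₁ + y₂)‖ ≤
      (‖(‖y₁‖ : ℝ) • x + y₁‖ + ‖(‖y₁‖ : ℝ) • x - y₁‖) +
      (‖(‖y₂‖ : ℝ) • x + y₂‖ + ‖(‖y₂‖ : ℝ) • x - y₂‖) :=
  stmt_1_general x y₁ y₂
end

section
/- Let C be a countable set in a Banach space X, and let (p_c)_{c∈C} be strictly positive reals with ∑_{c∈C} p_c(1 + ‖c‖) < ∞. Then |||x||| := ∑_{c∈C} p_c ‖x‖_c defines an equivalent norm on X, satisfying 2(∑ p_c)‖x‖ ≤ |||x||| ≤ 2(∑ p_c(1+‖c‖))‖x‖ for all x. -/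
section aux
variable {X : Type*} [NormedAddCommGroup X] [NormedSpace ℝ X]

/-- monotonicity of the symmetrized expression in the scalar. -/
private lemma sym_mono (u z : X) {s s' : ℝ} (hs : 0 ≤ s) (hss : s ≤ s') :
    ‖s • u + z‖ + ‖s • u - z‖ ≤ ‖s' • u + z‖ + ‖s' • u - z‖ := by
  rcases eq_or_lt_of_le (hs.trans hss) with h | h
  · have hs0 : s = 0 := le_antisymm (hss.trans h.symm.le) hs
    rw [hs0, ← h]
  · have hs'0 : s' ≠ 0 := ne_of_gt h
    have e1 : s • u + z = ((s' + s) / (2 * s')) • (s' • u + z) -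
        ((s' - s) / (2 * s')) • (s' • u - z) := by
      match_scalars <;> field_simp <;> ring
    have e2 : s • u - z = ((s' + s) / (2 * s')) • (s' • u - z) -
        ((s' - s) / (2 * s')) • (s' • u + z) := by
      match_scalars <;> field_simp <;> ring
    set a : ℝ := (s' + s) / (2 * s') with ha
    set b : ℝ := (s' - s) / (2 * s') with hb
    have ha0 : 0 ≤ a := by positivity
    have hb0 : 0 ≤ b := div_nonneg (by linarith) (by linarith)
    have hab : a + b = 1 := by rw [ha, hb]; field_simp; ring
    calc ‖s • u + z‖ + ‖s • u - z‖
        ≤ (‖a • (s' • u + z)‖ + ‖b • (s' • u - z)‖) +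
          (‖a • (s' • u - z)‖ + ‖b • (s' • u + z)‖) := by
          rw [e1, e2]; exact add_le_add (norm_sub_le _ _) (norm_sub_le _ _)
      _ = (a + b) * (‖s' • u + z‖ + ‖s' • u - z‖) := by
          rw [norm_smul, norm_smul, norm_smul, norm_smul,
            Real.norm_of_nonneg ha0, Real.norm_of_nonneg hb0]; ring
      _ = ‖s' • u + z‖ + ‖s' • u - z‖ := by rw [hab, one_mul]

private lemma sym_lower (u y : X) : 2 * ‖y‖ ≤ ‖(‖y‖ : ℝ) • u + y‖ + ‖(‖y‖ : ℝ) • u - y‖ := by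
  have : ((‖y‖ : ℝ) • u + y) - ((‖y‖ : ℝ) • u - y) = y + y := by abel
  calc 2 * ‖y‖ = ‖y + y‖ := by rw [← two_smul ℝ y, norm_smul]; simp
    _ = ‖((‖y‖ : ℝ) • u + y) - ((‖y‖ : ℝ) • u - y)‖ := by rw [this]
    _ ≤ _ := norm_sub_le _ _

private lemma sym_upper (u y : X) :
    ‖(‖y‖ : ℝ) • u + y‖ + ‖(‖y‖ : ℝ) • u - y‖ ≤ 2 * (1 + ‖u‖) * ‖y‖ := by
  have h1 : ‖(‖y‖ : ℝ) • u + y‖ ≤ ‖y‖ * ‖u‖ + ‖y‖ := by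
    calc ‖(‖y‖ : ℝ) • u + y‖ ≤ ‖(‖y‖ : ℝ) • u‖ + ‖y‖ := norm_add_le _ _
      _ = ‖y‖ * ‖u‖ + ‖y‖ := by rw [norm_smul]; simp
  have h2 : ‖(‖y‖ : ℝ) • u - y‖ ≤ ‖y‖ * ‖u‖ + ‖y‖ := by
    calc ‖(‖y‖ : ℝ) • u - y‖ ≤ ‖(‖y‖ : ℝ) • u‖ + ‖y‖ := norm_sub_le _ _
      _ = ‖y‖ * ‖u‖ + ‖y‖ := by rw [norm_smul]; simp
  nlinarith [h1, h2]

private lemma sym_subadd (u y₁ y₂ : X) :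
    ‖(‖y₁ + y₂‖ : ℝ) • u + (y₁ + y₂)‖ + ‖(‖y₁ + y₂‖ : ℝ) • u - (y₁ + y₂)‖ ≤
      (‖(‖y₁‖ : ℝ) • u + y₁‖ + ‖(‖y₁‖ : ℝ) • u - y₁‖) +
      (‖(‖y₂‖ : ℝ) • u + y₂‖ + ‖(‖y₂‖ : ℝ) • u - y₂‖) := by
  have step1 := sym_mono u (y₁ + y₂) (norm_nonneg (y₁ + y₂)) (norm_add_le y₁ y₂)
  refine step1.trans ?_
  have e1 : ((‖y₁‖ + ‖y₂‖ : ℝ)) • u + (y₁ + y₂) =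
      ((‖y₁‖ : ℝ) • u + y₁) + ((‖y₂‖ : ℝ) • u + y₂) := by
    rw [add_smul]; abel
  have e2 : ((‖y₁‖ + ‖y₂‖ : ℝ)) • u - (y₁ + y₂) =
      ((‖y₁‖ : ℝ) • u - y₁) + ((‖y₂‖ : ℝ) • u - y₂) := by
    rw [add_smul]; abel
  rw [e1, e2]
  have := norm_add_le ((‖y₁‖ : ℝ) • u + y₁) ((‖y₂‖ : ℝ) • u + y₂)
  have := norm_add_le ((‖y₁‖ : ℝ) • u - y₁) ((‖y₂‖ : ℝ) • u - y₂)
  linarith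

private lemma sym_smul (u y : X) (t : ℝ) :
    ‖(‖t • y‖ : ℝ) • u + t • y‖ + ‖(‖t • y‖ : ℝ) • u - t • y‖ =
      |t| * (‖(‖y‖ : ℝ) • u + y‖ + ‖(‖y‖ : ℝ) • u - y‖) := by
  rw [norm_smul, Real.norm_eq_abs]
  rcases le_or_gt 0 t with ht | ht
  · rw [abs_of_nonneg ht]
    have e1 : (t * ‖y‖) • u + t • y = t • ((‖y‖ : ℝ) • u + y) := by
      rw [smul_add, smul_smul]
    have e2 : (t * ‖y‖) • u - t • y = t • ((‖y‖ : ℝ) • u - y) := by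
      rw [smul_sub, smul_smul]
    rw [e1, e2, norm_smul, norm_smul, Real.norm_of_nonneg ht]; ring
  · rw [abs_of_neg ht]
    have e1 : (-t * ‖y‖) • u + t • y = (-t) • ((‖y‖ : ℝ) • u - y) := by
      match_scalars <;> ring
    have e2 : (-t * ‖y‖) • u - t • y = (-t) • ((‖y‖ : ℝ) • u + y) := by
      match_scalars <;> ring
    rw [e1, e2, norm_smul, norm_smul, Real.norm_of_nonneg (by linarith : (0:ℝ) ≤ -t)]
    ring

end aux

/-- A countable weighted sum of symmetrized type norms is an equivalent norm. -/
theorem stmt_4 {X : Type*} [NormedAddCommGroup X] [NormedSpace ℝ X] [CompleteSpace X]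
    (c : ℕ → X) (p : ℕ → ℝ) (hp : ∀ n, 0 < p n)
    (hsum : Summable (fun n => p n * (1 + ‖c n‖))) :
    let Nc : X → X → ℝ := fun u y => ‖(‖y‖ : ℝ) • u + y‖ + ‖(‖y‖ : ℝ) • u - y‖
    let T : X → ℝ := fun y => ∑' n, p n * Nc (c n) y
    (∀ y, Summable (fun n => p n * Nc (c n) y)) ∧
    (∀ y₁ y₂ : X, T (y₁ + y₂) ≤ T y₁ + T y₂) ∧
    (∀ (t : ℝ) (y : X), T (t • y) = |t| * T y) ∧
    (∀ y : X, 2 * (∑' n, p n) * ‖y‖ ≤ T y ∧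
      T y ≤ 2 * (∑' n, p n * (1 + ‖c n‖)) * ‖y‖) := by
  intro Nc T
  have hNc_nonneg : ∀ u y : X, 0 ≤ Nc u y := fun u y =>
    add_nonneg (norm_nonneg _) (norm_nonneg _)
  have hS : ∀ y : X, Summable (fun n => p n * Nc (c n) y) := by
    intro y
    have hb : Summable (fun n => 2 * ‖y‖ * (p n * (1 + ‖c n‖))) := hsum.mul_left _
    apply Summable.of_nonneg_of_le
      (fun n => mul_nonneg (hp n).le (hNc_nonneg _ _)) (fun n => ?_) hb
    calc p n * Nc (c n) y ≤ p n * (2 * (1 + ‖c n‖) * ‖y‖) :=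
          mul_le_mul_of_nonneg_left (sym_upper (c n) y) (hp n).le
      _ = 2 * ‖y‖ * (p n * (1 + ‖c n‖)) := by ring
  refine ⟨hS, ?_, ?_, ?_⟩
  · intro y₁ y₂
    have h1 := hS y₁
    have h2 := hS y₂
    calc T (y₁ + y₂) ≤ ∑' n, (p n * Nc (c n) y₁ + p n * Nc (c n) y₂) := by
          apply Summable.tsum_le_tsum _ (hS (y₁ + y₂)) (h1.add h2)
          intro n
          have := sym_subadd (c n) y₁ y₂
          have hpn := (hp n).le
          calc p n * Nc (c n) (y₁ + y₂) ≤ p n * (Nc (c n) y₁ + Nc (c n) y₂) :=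
                mul_le_mul_of_nonneg_left this hpn
            _ = p n * Nc (c n) y₁ + p n * Nc (c n) y₂ := by ring
      _ = T y₁ + T y₂ := Summable.tsum_add h1 h2
  · intro t y
    have : ∀ n, p n * Nc (c n) (t • y) = |t| * (p n * Nc (c n) y) := by
      intro n
      have h := sym_smul (c n) y t
      simp only [Nc]
      rw [h]; ring
    calc T (t • y) = ∑' n, |t| * (p n * Nc (c n) y) := tsum_congr this
      _ = |t| * T y := tsum_mul_left
  · intro y
    have hps : Summable p := by
      apply Summable.of_nonneg_of_le (fun n => (hp n).le) (fun n => ?_) hsum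
      exact le_mul_of_one_le_right (hp n).le (by linarith [norm_nonneg (c n)])
    constructor
    · calc 2 * (∑' n, p n) * ‖y‖ = ∑' n, p n * (2 * ‖y‖) := by
            rw [tsum_mul_right]; ring
        _ ≤ T y := by
            apply Summable.tsum_le_tsum _ (hps.mul_right _) (hS y)
            intro n
            exact mul_le_mul_of_nonneg_left (sym_lower (c n) y) (hp n).le
    · calc T y ≤ ∑' n, (p n * (1 + ‖c n‖)) * (2 * ‖y‖) := by
            apply Summable.tsum_le_tsum _ (hS y) (hsum.mul_right _)
            intro n
            calc p n * Nc (c n) y ≤ p n * (2 * (1 + ‖c n‖) * ‖y‖) :=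
                  mul_le_mul_of_nonneg_left (sym_upper (c n) y) (hp n).le
              _ = (p n * (1 + ‖c n‖)) * (2 * ‖y‖) := by ring
        _ = 2 * (∑' n, p n * (1 + ‖c n‖)) * ‖y‖ := by rw [tsum_mul_right]; ring
end

section
/- Suppose (a_{m,n})_{m<n} and (b_m) are bounded nonnegative double and single sequences with a_{m,n} ≤ b_m + b_n for all m < n, lim_m b_m exists, lim_m lim_n a_{m,n} exists, and lim_m lim_n a_{m,n} = 2 lim_m b_m. If a_{m,n} = ∑_{c} p_c a^c_{m,n} and b_m = ∑_c p_c b^c_m are countable sums with p_c > 0, ∑_c p_c M_c < ∞ where 0 ≤ a^c_{m,n} ≤ b^c_m + b^c_n ≤ M_c, and all iterated limits lim_m lim_n a^c_{m,n} and lim_m b^c_m exist, then for every c, lim_m lim_n a^c_{m,n} = 2 lim_m b^c_m. -/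
/-! Taking limits termwise (dominated convergence, with dominating series `∑ p c M c`) turns the
hypotheses into `∑ p c La c = LA = 2 lB = ∑ p c (2 lb c)`. Subadditivity `a ≤ b m + b n` passes to
the iterated limits as `La c ≤ 2 lb c`, and a sum of termwise smaller terms with the same total
forces equality term by term, since every `p c` is positive. -/

open Filter Topology

theorem Summable.eq_of_le_of_tsum_eq {ι α : Type*} [AddCommGroup α] [PartialOrder α]
    [IsOrderedAddMonoid α] [TopologicalSpace α] [IsTopologicalAddGroup α] [OrderClosedTopology α]
    {f g : ι → α} (hf : Summable f) (hg : Summable g) (hle : f ≤ g)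
    (h : ∑' i, f i = ∑' i, g i) : f = g := by
  by_contra hne
  obtain ⟨i, hi⟩ := (Pi.lt_def.1 (lt_of_le_of_ne hle hne)).2
  exact (Summable.tsum_lt_tsum hle hi hf hg).ne h

theorem le_two_mul_of_iterated_tendsto {a : ℕ → ℕ → ℝ} {b la : ℕ → ℝ} {La lb : ℝ}
    (hsub : ∀ m n, m < n → a m n ≤ b m + b n)
    (hla : ∀ m, Tendsto (a m) atTop (𝓝 (la m))) (hLa : Tendsto la atTop (𝓝 La))
    (hlb : Tendsto b atTop (𝓝 lb)) : La ≤ 2 * lb := by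
  have hla_le : ∀ m, la m ≤ b m + lb := fun m =>
    le_of_tendsto_of_tendsto (hla m) (tendsto_const_nhds.add hlb)
      (eventually_atTop.2 ⟨m + 1, fun n hn => hsub m n hn⟩)
  linarith [le_of_tendsto_of_tendsto hLa (hlb.add_const lb) (.of_forall hla_le)]

section WeightedSum

variable {ι : Type*} {p M : ι → ℝ}

theorem norm_mul_le_mul_of_norm_le (hp : ∀ c, 0 ≤ p c) {c : ι} {x : ℝ} (hx : ‖x‖ ≤ M c) :
    ‖p c * x‖ ≤ p c * M c := by
  rw [norm_mul, Real.norm_of_nonneg (hp c)]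
  exact mul_le_mul_of_nonneg_left hx (hp c)

theorem summable_mul_of_norm_le (hp : ∀ c, 0 ≤ p c) (hM : Summable fun c => p c * M c)
    {g : ι → ℝ} (hg : ∀ c, ‖g c‖ ≤ M c) : Summable fun c => p c * g c :=
  hM.of_norm_bounded fun c => norm_mul_le_mul_of_norm_le hp (hg c)

theorem tendsto_tsum_mul_of_norm_le (hp : ∀ c, 0 ≤ p c) (hM : Summable fun c => p c * M c)
    {α : Type*} {l : Filter α} {f : α → ι → ℝ} {g : ι → ℝ}
    (hf : ∀ c, Tendsto (f · c) l (𝓝 (g c))) (hbound : ∀ᶠ x in l, ∀ c, ‖f x c‖ ≤ M c) :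
    Tendsto (fun x => ∑' c, p c * f x c) l (𝓝 (∑' c, p c * g c)) :=
  tendsto_tsum_of_dominated_convergence hM (fun c => (hf c).const_mul (p c)) <|
    hbound.mono fun _ hx c => norm_mul_le_mul_of_norm_le hp (hx c)

end WeightedSum

/-- Key exchange-of-limits argument from Lemma 2.2: equality in the aggregate
limit forces equality term by term. -/
theorem stmt_7 (p : ℕ → ℝ) (a : ℕ → ℕ → ℕ → ℝ) (b : ℕ → ℕ → ℝ) (M : ℕ → ℝ)
    (hp : ∀ c, 0 < p c)
    (hM : Summable (fun c => p c * M c))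
    (hanonneg : ∀ c m n, m < n → 0 ≤ a c m n)
    (hsub : ∀ c m n, m < n → a c m n ≤ b c m + b c n)
    (hbnonneg : ∀ c m, 0 ≤ b c m)
    (hbM : ∀ c m n, b c m + b c n ≤ M c)
    (la : ℕ → ℕ → ℝ) (La : ℕ → ℝ) (lb : ℕ → ℝ)
    (hla : ∀ c m, Tendsto (fun n => a c m n) atTop (nhds (la c m)))
    (hLa : ∀ c, Tendsto (fun m => la c m) atTop (nhds (La c)))
    (hlb : ∀ c, Tendsto (fun m => b c m) atTop (nhds (lb c)))
    (lA : ℕ → ℝ) (LA lB : ℝ)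
    (hlA : ∀ m, Tendsto (fun n => ∑' c, p c * a c m n) atTop (nhds (lA m)))
    (hLA : Tendsto lA atTop (nhds LA))
    (hlB : Tendsto (fun m => ∑' c, p c * b c m) atTop (nhds lB))
    (heq : LA = 2 * lB) :
    ∀ c, La c = 2 * lb c := by
  have hp₀ : ∀ c, 0 ≤ p c := fun c => (hp c).le
  have ha_le : ∀ c m n, m < n → ‖a c m n‖ ≤ M c := fun c m n h => by
    rw [Real.norm_of_nonneg (hanonneg c m n h)]
    exact (hsub c m n h).trans (hbM c m n)
  have hb_le : ∀ c m, ‖b c m‖ ≤ M c := fun c m => by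
    rw [Real.norm_of_nonneg (hbnonneg c m)]
    linarith [hbM c m m, hbnonneg c m]
  have hla_le : ∀ c m, ‖la c m‖ ≤ M c := fun c m =>
    le_of_tendsto (hla c m).norm (eventually_atTop.2 ⟨m + 1, fun n hn => ha_le c m n hn⟩)
  have hLa_le : ∀ c, ‖La c‖ ≤ M c := fun c => le_of_tendsto (hLa c).norm (.of_forall (hla_le c))
  have hlb_le : ∀ c, ‖lb c‖ ≤ M c := fun c => le_of_tendsto (hlb c).norm (.of_forall (hb_le c))
  have hlA_eq : ∀ m, lA m = ∑' c, p c * la c m := fun m =>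
    tendsto_nhds_unique (hlA m) <| tendsto_tsum_mul_of_norm_le hp₀ hM (fun c => hla c m)
      (eventually_atTop.2 ⟨m + 1, fun n hn c => ha_le c m n hn⟩)
  have hLA_eq : LA = ∑' c, p c * La c :=
    tendsto_nhds_unique (hLA.congr hlA_eq) <|
      tendsto_tsum_mul_of_norm_le hp₀ hM hLa (.of_forall fun m c => hla_le c m)
  have hlB_eq : lB = ∑' c, p c * lb c :=
    tendsto_nhds_unique hlB <|
      tendsto_tsum_mul_of_norm_le hp₀ hM hlb (.of_forall fun m c => hb_le c m)
  have hterm : (fun c => p c * La c) = fun c => 2 * (p c * lb c) := by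
    refine Summable.eq_of_le_of_tsum_eq (summable_mul_of_norm_le hp₀ hM hLa_le)
      ((summable_mul_of_norm_le hp₀ hM hlb_le).mul_left 2) (fun c => ?_) ?_
    · have := le_two_mul_of_iterated_tendsto (hsub c) (hla c) (hLa c) (hlb c)
      nlinarith [hp c]
    · rw [tsum_mul_left, ← hLA_eq, ← hlB_eq, heq]
  intro c
  have := congrFun hterm c
  exact mul_left_cancel₀ (hp c).ne' (by linarith)
end

section
/- Let (x_n) be a normalized sequence in a Banach space X satisfying: for all x ∈ X and all reals β₁, β₂ with |β₁| + |β₂| ≠ 0, lim_m lim_n ‖x + β₁ x_m + β₂ x_n‖ = lim_m ( ‖(|β₁|/(|β₁|+|β₂|))•x + β₁ x_m‖ + ‖(|β₂|/(|β₁|+|β₂|))•x + β₂ x_m‖ ). Then for any ε_i ↓ 0 in (0,1) there is a subsequence (x_{n_i}) with ‖∑_{i=i₀}^k α_i x_{n_i}‖ ≥ (1 − ε_{i₀}) ∑_{i=i₀}^k |α_i| for all 1 ≤ i₀ ≤ k and all real scalars; in particular (x_{n_i}) is equivalent to the unit vector basis of ℓ₁. -/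
/-!
Write `τ(y, β) = lim_n ‖y + β x_n‖` (`seqType`) for the type generated by `(x_n)`. The hypothesis
says that `τ(y + γ x_m, β)` tends, as `m → ∞`, to `τ(λ y, γ) + τ(μ y, β)` with
`λ = |γ| / (|γ| + |β|)` and `μ = |β| / (|γ| + |β|)` (`splitType`). Since `τ` is Lipschitz, Ascoli
makes this convergence uniform over the compact set of `y` in the span of finitely many chosen
`x_{n_i}` with coefficients of total `ℓ₁`-mass at most `1`, so `n_k` can be chosen inductively
with error `ε_k - ε_{k+1}` (`AlmostSplits`). Positive homogeneity of `τ` and `τ(0, β) = |β|` then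
give, by induction on `k`, `τ(∑_{i₀ ≤ i < k} a_i x_{n_i}, β) ≥ ∑ |a_i| + |β| - (ε_{i₀} - ε_k)`
whenever the left-hand mass is at most `1`; taking `β = 0` and rescaling gives the lower `ℓ₁`
estimate.
-/

open Filter Topology

theorem tendstoUniformlyOn_of_lipschitzWith {ι E β : Type*} [PseudoMetricSpace E]
    [PseudoMetricSpace β] {K : Set E} (hK : IsCompact K) {l : Filter ι} {f : ι → E → β}
    {r : E → β} {L : NNReal} (hf : ∀ i, LipschitzWith L (f i))
    (hr : ∀ p ∈ K, Tendsto (fun i => f i p) l (𝓝 (r p))) :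
    TendstoUniformlyOn f r l K := by
  have : CompactSpace K := isCompact_iff_compactSpace.mp hK
  have hequi : Equicontinuous fun i (p : K) => f i p :=
    (LipschitzWith.uniformEquicontinuous _ (L * 1) fun i =>
      (hf i).comp (LipschitzWith.subtype_val K)).equicontinuous
  rw [tendstoUniformlyOn_iff_tendstoUniformly_comp_coe]
  exact UniformFun.tendsto_iff_tendstoUniformly.1 <|
    (hequi.tendsto_uniformFun_iff_pi l _).2 (tendsto_pi_nhds.2 fun p => hr p p.2)

theorem exists_seq_forall_prefix {α : Type*} {P : ∀ k, (Fin k → α) → α → Prop}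
    (h : ∀ k v, ∃ a, P k v a) : ∃ n : ℕ → α, ∀ k, P k (fun i => n i) (n k) := by
  let n : ℕ → α := Nat.strongRec fun k prev => (h k fun i => prev i i.2).choose
  refine ⟨n, fun k => ?_⟩
  have hk : n k = (h k fun i => n i).choose := Nat.strongRec_eq ..
  exact hk ▸ (h k _).choose_spec

theorem Finset.sum_fin_ite_le_eq_sum_Ico {M : Type*} [AddCommMonoid M] (f : ℕ → M)
    (i₀ k : ℕ) : ∑ i : Fin k, (if i₀ ≤ (i : ℕ) then f i else 0) = ∑ i ∈ Ico i₀ k, f i := by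
  rw [Fin.sum_univ_eq_sum_range (fun i => if i₀ ≤ i then f i else 0), ← sum_filter]
  congr 1
  ext i
  simp [and_comm]

theorem mem_closedBall_zero_of_sum_abs_le_one {k : ℕ} {c : Fin k → ℝ} {γ β : ℝ}
    (h : ∑ i, |c i| + |γ| + |β| ≤ 1) :
    (c, γ, β) ∈ Metric.closedBall (0 : (Fin k → ℝ) × ℝ × ℝ) 1 := by
  have hc : ∀ i, |c i| ≤ ∑ i, |c i| := fun i =>
    Finset.single_le_sum (fun i _ => abs_nonneg (c i)) (Finset.mem_univ i)
  have hsum : 0 ≤ ∑ i, |c i| := Finset.sum_nonneg fun i _ => abs_nonneg (c i)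
  simp only [mem_closedBall_zero_iff, norm_prod_le_iff, Real.norm_eq_abs]
  refine ⟨(pi_norm_le_iff_of_nonneg zero_le_one).2 fun i => ?_, ?_, ?_⟩
  · rw [Real.norm_eq_abs]
    linarith [hc i, abs_nonneg γ, abs_nonneg β]
  · linarith [abs_nonneg β]
  · linarith [abs_nonneg γ]

section

variable {X : Type*} [NormedAddCommGroup X] [NormedSpace ℝ X]

def NormAddSMulConverges (x : ℕ → X) : Prop :=
  ∀ (y : X) (β : ℝ), ∃ t, Tendsto (fun n => ‖y + β • x n‖) atTop (𝓝 t)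

noncomputable def seqType (x : ℕ → X) (y : X) (β : ℝ) : ℝ :=
  limUnder atTop fun n => ‖y + β • x n‖

noncomputable def splitType (x : ℕ → X) (y : X) (γ β : ℝ) : ℝ :=
  seqType x ((|γ| / (|γ| + |β|)) • y) γ + seqType x ((|β| / (|γ| + |β|)) • y) β

def HasSymmetricL1Type (x : ℕ → X) : Prop :=
  ∀ (y : X) (β₁ β₂ : ℝ), |β₁| + |β₂| ≠ 0 →
    ∃ (L : ℕ → ℝ) (l : ℝ),
      (∀ m, Tendsto (fun n => ‖y + β₁ • x m + β₂ • x n‖) atTop (𝓝 (L m))) ∧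
      Tendsto L atTop (𝓝 l) ∧
      Tendsto (fun m =>
        ‖(|β₁| / (|β₁| + |β₂|)) • y + β₁ • x m‖ +
        ‖(|β₂| / (|β₁| + |β₂|)) • y + β₂ • x m‖) atTop (𝓝 l)

def AlmostSplits (x : ℕ → X) (η : ℕ → ℝ) (n : ℕ → ℕ) : Prop :=
  ∀ (k : ℕ) (c : Fin k → ℝ) (γ β : ℝ), ∑ i, |c i| + |γ| + |β| ≤ 1 → |γ| + |β| ≠ 0 →
    splitType x (∑ i, c i • x (n i)) γ β - η k ≤ seqType x (∑ i, c i • x (n i) + γ • x (n k)) β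

variable {x : ℕ → X}

namespace seqType

theorem tendsto (hx : NormAddSMulConverges x) (y : X) (β : ℝ) :
    Tendsto (fun n => ‖y + β • x n‖) atTop (𝓝 (seqType x y β)) :=
  tendsto_nhds_limUnder (hx y β)

theorem zero_right (y : X) : seqType x y 0 = ‖y‖ := by
  simp [seqType, tendsto_const_nhds.limUnder_eq]

theorem zero_left (hnorm : ∀ n, ‖x n‖ = 1) (β : ℝ) : seqType x 0 β = |β| := by
  simp [seqType, norm_smul, hnorm, tendsto_const_nhds.limUnder_eq]

theorem le_add (hx : NormAddSMulConverges x) (hnorm : ∀ n, ‖x n‖ ≤ 1) (y y' : X) (β β' : ℝ) :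
    seqType x y β ≤ seqType x y' β' + (‖y - y'‖ + |β - β'|) := by
  refine le_of_tendsto_of_tendsto' (tendsto hx y β)
    ((tendsto hx y' β').add tendsto_const_nhds) fun n => ?_
  calc ‖y + β • x n‖ = ‖(y' + β' • x n) + ((y - y') + (β - β') • x n)‖ := by
        rw [sub_smul]; abel_nf
    _ ≤ ‖y' + β' • x n‖ + (‖y - y'‖ + ‖(β - β') • x n‖) :=
        (norm_add_le _ _).trans (by gcongr; exact norm_add_le _ _)
    _ ≤ ‖y' + β' • x n‖ + (‖y - y'‖ + |β - β'|) := by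
        rw [norm_smul, Real.norm_eq_abs]
        gcongr
        exact mul_le_of_le_one_right (abs_nonneg _) (hnorm n)

theorem smul (hx : NormAddSMulConverges x) {c : ℝ} (hc : 0 ≤ c) (y : X) (β : ℝ) :
    seqType x (c • y) (c * β) = c * seqType x y β := by
  refine tendsto_nhds_unique (tendsto hx _ _) ?_
  simp_rw [mul_smul, ← smul_add, norm_smul, Real.norm_of_nonneg hc]
  exact (tendsto hx y β).const_mul c

theorem lipschitzWith_add_smul (hx : NormAddSMulConverges x) (hnorm : ∀ n, ‖x n‖ ≤ 1) (z : X)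
    (hz : ‖z‖ ≤ 1) : LipschitzWith 3 fun p : X × ℝ × ℝ => seqType x (p.1 + p.2.1 • z) p.2.2 := by
  refine LipschitzWith.of_le_add_mul 3 fun p q => ?_
  have hdist : ‖p.1 - q.1‖ + |p.2.1 - q.2.1| + |p.2.2 - q.2.2| ≤ 3 * dist p q := by
    have h1 : ‖p.1 - q.1‖ ≤ ‖p - q‖ := norm_fst_le (p - q)
    have h2 : |p.2.1 - q.2.1| ≤ ‖p - q‖ := (norm_fst_le (p - q).2).trans (norm_snd_le (p - q))
    have h3 : |p.2.2 - q.2.2| ≤ ‖p - q‖ := (norm_snd_le (p - q).2).trans (norm_snd_le (p - q))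
    rw [dist_eq_norm]
    linarith
  have hz' : ‖(p.1 + p.2.1 • z) - (q.1 + q.2.1 • z)‖ ≤ ‖p.1 - q.1‖ + |p.2.1 - q.2.1| := by
    rw [add_sub_add_comm, ← sub_smul]
    refine (norm_add_le _ _).trans ?_
    rw [norm_smul, Real.norm_eq_abs]
    gcongr
    exact mul_le_of_le_one_right (abs_nonneg _) hz
  have := le_add hx hnorm (p.1 + p.2.1 • z) (q.1 + q.2.1 • z) p.2.2 q.2.2
  push_cast
  linarith

theorem mul_le_smul (hx : NormAddSMulConverges x) {y : X} {c t : ℝ}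
    (ht : 0 < t) (hc : ∀ u, |u| = t → c ≤ seqType x y u) (γ : ℝ) :
    |γ| / t * c ≤ seqType x ((|γ| / t) • y) γ := by
  rcases eq_or_ne γ 0 with rfl | hγ
  · simp [zero_right]
  have hu : |t / |γ| * γ| = t := by
    rw [abs_mul, abs_div, abs_abs, abs_of_pos ht, div_mul_cancel₀ _ (abs_ne_zero.2 hγ)]
  have hγu : γ = |γ| / t * (t / |γ| * γ) := by field_simp
  calc |γ| / t * c ≤ |γ| / t * seqType x y (t / |γ| * γ) :=
        mul_le_mul_of_nonneg_left (hc _ hu) (by positivity)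
    _ = seqType x ((|γ| / t) • y) γ := by rw [← smul hx (by positivity), ← hγu]

end seqType

theorem le_splitType (hx : NormAddSMulConverges x) {y : X} {γ β c : ℝ}
    (hγβ : |γ| + |β| ≠ 0) (hc : ∀ u, |u| = |γ| + |β| → c ≤ seqType x y u) :
    c ≤ splitType x y γ β := by
  have ht : 0 < |γ| + |β| := lt_of_le_of_ne (by positivity) hγβ.symm
  have hsum : |γ| / (|γ| + |β|) * c + |β| / (|γ| + |β|) * c = c := by
    field_simp
  rw [← hsum]
  exact add_le_add (seqType.mul_le_smul hx ht hc γ) (seqType.mul_le_smul hx ht hc β)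

namespace HasSymmetricL1Type

theorem normAddSMulConverges (hx : HasSymmetricL1Type x) : NormAddSMulConverges x := by
  intro y β
  rcases eq_or_ne β 0 with rfl | hβ
  · exact ⟨‖y‖, by simp⟩
  · obtain ⟨L, -, hL, -⟩ := hx y 0 β (by positivity)
    exact ⟨L 0, by simpa using hL 0⟩

theorem tendsto_seqType_add_smul (hx : HasSymmetricL1Type x) (y : X) {γ β : ℝ}
    (hγβ : |γ| + |β| ≠ 0) :
    Tendsto (fun m => seqType x (y + γ • x m) β) atTop (𝓝 (splitType x y γ β)) := by
  have hconv := hx.normAddSMulConverges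
  obtain ⟨L, l, hL, hLl, hl⟩ := hx y γ β hγβ
  have hL' : L = fun m => seqType x (y + γ • x m) β :=
    funext fun m => tendsto_nhds_unique (hL m) (seqType.tendsto hconv _ _)
  have hl' : l = splitType x y γ β :=
    tendsto_nhds_unique hl ((seqType.tendsto hconv _ _).add (seqType.tendsto hconv _ _))
  exact hL' ▸ hl' ▸ hLl

theorem eventually_splitType_sub_le (hx : HasSymmetricL1Type x) (hnorm : ∀ n, ‖x n‖ ≤ 1)
    {K : Set (X × ℝ × ℝ)} (hK : IsCompact K) {η : ℝ} (hη : 0 < η) :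
    ∀ᶠ m in atTop, ∀ p ∈ K, |p.2.1| + |p.2.2| ≠ 0 →
      splitType x p.1 p.2.1 p.2.2 - η ≤ seqType x (p.1 + p.2.1 • x m) p.2.2 := by
  set F : ℕ → X × ℝ × ℝ → ℝ := fun m p => seqType x (p.1 + p.2.1 • x m) p.2.2
  have hF : ∀ p, ∃ l, Tendsto (F · p) atTop (𝓝 l) := by
    rintro ⟨y, γ, β⟩
    by_cases hγβ : |γ| + |β| = 0
    · obtain ⟨rfl, rfl⟩ : γ = 0 ∧ β = 0 := by
        constructor <;> apply abs_eq_zero.1 <;> linarith [abs_nonneg γ, abs_nonneg β]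
      exact ⟨_, tendsto_const_nhds (x := ‖y‖) |>.congr fun m => by simp [F, seqType.zero_right]⟩
    · exact ⟨_, hx.tendsto_seqType_add_smul y hγβ⟩
  have hunif : TendstoUniformlyOn F (fun p => limUnder atTop (F · p)) atTop K :=
    tendstoUniformlyOn_of_lipschitzWith hK
      (fun m => seqType.lipschitzWith_add_smul hx.normAddSMulConverges hnorm _ (hnorm m))
      fun p _ => tendsto_nhds_limUnder (hF p)
  filter_upwards [Metric.tendstoUniformlyOn_iff.1 hunif η hη] with m hm p hp hγβ
  have hlim : limUnder atTop (F · p) = splitType x p.1 p.2.1 p.2.2 :=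
    (hx.tendsto_seqType_add_smul p.1 hγβ).limUnder_eq
  have := hm p hp
  rw [hlim, Real.dist_eq, abs_lt] at this
  linarith [this.2]

theorem exists_strictMono_almostSplits (hx : HasSymmetricL1Type x) (hnorm : ∀ n, ‖x n‖ ≤ 1)
    {η : ℕ → ℝ} (hη : ∀ k, 0 < η k) : ∃ n : ℕ → ℕ, StrictMono n ∧ AlmostSplits x η n := by
  have hstep : ∀ (k : ℕ) (v : Fin k → ℕ), ∃ m, (∀ i, v i < m) ∧
      ∀ (c : Fin k → ℝ) (γ β : ℝ), ∑ i, |c i| + |γ| + |β| ≤ 1 → |γ| + |β| ≠ 0 →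
        splitType x (∑ i, c i • x (v i)) γ β - η k ≤
          seqType x (∑ i, c i • x (v i) + γ • x m) β := by
    intro k v
    let K := (fun p : (Fin k → ℝ) × ℝ × ℝ => (∑ i, p.1 i • x (v i), p.2)) ''
      Metric.closedBall 0 1
    have hK : IsCompact K := (isCompact_closedBall _ _).image (by fun_prop)
    obtain ⟨m, hm, hmK⟩ := ((eventually_gt_atTop (Finset.univ.sup v)).and
      (hx.eventually_splitType_sub_le hnorm hK (hη k))).exists
    refine ⟨m, fun i => (Finset.le_sup (Finset.mem_univ i)).trans_lt hm, fun c γ β hc hγβ => ?_⟩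
    exact hmK (∑ i, c i • x (v i), γ, β)
      ⟨(c, γ, β), mem_closedBall_zero_of_sum_abs_le_one hc, rfl⟩ hγβ
  obtain ⟨n, hn⟩ := exists_seq_forall_prefix hstep
  refine ⟨n, strictMono_nat_of_lt_succ fun k => ?_, fun k => (hn k).2⟩
  exact (hn (k + 1)).1 (Fin.last k)

end HasSymmetricL1Type

namespace AlmostSplits

theorem sum_abs_sub_le_seqType {η : ℕ → ℝ} {n : ℕ → ℕ} (hn : AlmostSplits x η n)
    (hx : NormAddSMulConverges x) (hnorm : ∀ n, ‖x n‖ = 1) (hη : ∀ k, 0 ≤ η k)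
    {i₀ k : ℕ} (hk : i₀ ≤ k) (a : ℕ → ℝ) (β : ℝ)
    (hmass : ∑ i ∈ Finset.Ico i₀ k, |a i| + |β| ≤ 1) :
    ∑ i ∈ Finset.Ico i₀ k, |a i| + |β| - ∑ i ∈ Finset.Ico i₀ k, η i ≤
      seqType x (∑ i ∈ Finset.Ico i₀ k, a i • x (n i)) β := by
  induction k, hk using Nat.le_induction generalizing β with
  | base => simp [seqType.zero_left hnorm]
  | succ k hk ih =>
    simp only [Finset.sum_Ico_succ_top hk] at hmass ⊢
    set s := ∑ i ∈ Finset.Ico i₀ k, |a i|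
    set Y := ∑ i ∈ Finset.Ico i₀ k, a i • x (n i)
    rcases eq_or_ne (a k) 0 with hak | hak
    · simp only [hak, abs_zero, add_zero, zero_smul] at hmass ⊢
      linarith [ih β hmass, hη k]
    let c : Fin k → ℝ := fun i => if i₀ ≤ (i : ℕ) then a i else 0
    have hcY : ∑ i, c i • x (n i) = Y := by
      simp only [c, ite_smul, zero_smul]
      exact Finset.sum_fin_ite_le_eq_sum_Ico (fun i => a i • x (n i)) i₀ k
    have hcs : ∑ i, |c i| = s := by
      simp only [c, apply_ite abs, abs_zero]
      exact Finset.sum_fin_ite_le_eq_sum_Ico (fun i => |a i|) i₀ k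
    have hγβ : |a k| + |β| ≠ 0 := by positivity
    have hsplit : s + (|a k| + |β|) - ∑ i ∈ Finset.Ico i₀ k, η i ≤ splitType x Y (a k) β :=
      le_splitType hx hγβ fun u hu => hu ▸ ih u (by linarith)
    have := hn k c (a k) β (by rw [hcs]; linarith) hγβ
    rw [hcY] at this
    linarith

theorem one_sub_mul_sum_abs_le_norm {η : ℕ → ℝ} {n : ℕ → ℕ} (hn : AlmostSplits x η n)
    (hx : NormAddSMulConverges x) (hnorm : ∀ n, ‖x n‖ = 1) (hη : ∀ k, 0 ≤ η k)
    {i₀ k : ℕ} (hk : i₀ ≤ k) (α : ℕ → ℝ) :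
    (1 - ∑ i ∈ Finset.Ico i₀ k, η i) * ∑ i ∈ Finset.Ico i₀ k, |α i| ≤
      ‖∑ i ∈ Finset.Ico i₀ k, α i • x (n i)‖ := by
  set S := ∑ i ∈ Finset.Ico i₀ k, |α i|
  have hS0 : 0 ≤ S := Finset.sum_nonneg fun i _ => abs_nonneg (α i)
  rcases hS0.eq_or_lt with hS | hS
  · rw [← hS, mul_zero]
    exact norm_nonneg _
  have hmass : ∑ i ∈ Finset.Ico i₀ k, |α i / S| = 1 := by
    rw [← div_self hS.ne', Finset.sum_div]
    exact Finset.sum_congr rfl fun i _ => by rw [abs_div, abs_of_pos hS]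
  have hnormalized := hn.sum_abs_sub_le_seqType hx hnorm hη hk (fun i => α i / S) 0
    (by simpa using hmass.le)
  have hsum : ∑ i ∈ Finset.Ico i₀ k, (α i / S) • x (n i) =
      S⁻¹ • ∑ i ∈ Finset.Ico i₀ k, α i • x (n i) := by
    simp_rw [Finset.smul_sum, div_eq_inv_mul, mul_smul]
  rw [hmass, abs_zero, add_zero, seqType.zero_right, hsum, norm_smul,
    Real.norm_of_nonneg (inv_nonneg.2 hS.le), inv_mul_eq_div, le_div_iff₀ hS] at hnormalized
  exact hnormalized

end AlmostSplits

end

theorem stmt_10_general {X : Type*} [NormedAddCommGroup X] [NormedSpace ℝ X]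
    (x : ℕ → X) (hnorm : ∀ n, ‖x n‖ = 1)
    (htype : ∀ (y : X) (β₁ β₂ : ℝ), |β₁| + |β₂| ≠ 0 →
      ∃ (L : ℕ → ℝ) (l : ℝ),
        (∀ m, Tendsto (fun n => ‖y + β₁ • x m + β₂ • x n‖) atTop (nhds (L m))) ∧
        Tendsto L atTop (nhds l) ∧
        Tendsto (fun m =>
          ‖(|β₁| / (|β₁| + |β₂|)) • y + β₁ • x m‖ +
          ‖(|β₂| / (|β₁| + |β₂|)) • y + β₂ • x m‖) atTop (nhds l))
    (ε : ℕ → ℝ) (hε : StrictAnti ε) (hε1 : ∀ i, 0 < ε i ∧ ε i < 1) :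
    ∃ n : ℕ → ℕ, StrictMono n ∧
      (∀ i₀ k, i₀ ≤ k → ∀ α : ℕ → ℝ,
        (1 - ε i₀) * ∑ i ∈ Finset.Icc i₀ k, |α i| ≤
          ‖∑ i ∈ Finset.Icc i₀ k, α i • x (n i)‖) ∧
      ∃ A B : ℝ, 0 < A ∧ 0 < B ∧ ∀ (k : ℕ) (α : ℕ → ℝ),
        A * ∑ i ∈ Finset.range k, |α i| ≤ ‖∑ i ∈ Finset.range k, α i • x (n i)‖ ∧
        ‖∑ i ∈ Finset.range k, α i • x (n i)‖ ≤ B * ∑ i ∈ Finset.range k, |α i| := by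
  have hx : HasSymmetricL1Type x := htype
  have hη : ∀ k, 0 < ε k - ε (k + 1) := fun k => sub_pos.2 (hε k.lt_succ_self)
  obtain ⟨n, hmono, hn⟩ := hx.exists_strictMono_almostSplits (fun n => (hnorm n).le) hη
  have hlower : ∀ i₀ k, i₀ ≤ k → ∀ α : ℕ → ℝ,
      (1 - ε i₀) * ∑ i ∈ Finset.Ico i₀ k, |α i| ≤ ‖∑ i ∈ Finset.Ico i₀ k, α i • x (n i)‖ := by
    intro i₀ k hk α
    have htelescope : ∑ i ∈ Finset.Ico i₀ k, (ε i - ε (i + 1)) = ε i₀ - ε k := by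
      have := Finset.sum_Ico_sub (fun i => -ε i) hk
      simp only [neg_sub_neg] at this
      rw [this]
    refine le_trans ?_ (hn.one_sub_mul_sum_abs_le_norm hx.normAddSMulConverges hnorm
      (fun k => (hη k).le) hk α)
    rw [htelescope]
    gcongr
    linarith [(hε1 k).1]
  refine ⟨n, hmono, fun i₀ k hk α => ?_, 1 - ε 0, 1, by linarith [(hε1 0).2], one_pos,
    fun k α => ⟨?_, ?_⟩⟩
  · simpa only [Finset.Ico_add_one_right_eq_Icc] using hlower i₀ (k + 1) (by omega) α
  · simpa only [Finset.range_eq_Ico] using hlower 0 k k.zero_le α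
  · rw [one_mul]
    refine (norm_sum_le _ _).trans_eq (Finset.sum_congr rfl fun i _ => ?_)
    rw [norm_smul, hnorm, mul_one, Real.norm_eq_abs]

/-- Lemma 2.3(b): a symmetric ℓ₁ type yields a subsequence almost isometrically
equivalent to the unit vector basis of ℓ₁. -/
theorem stmt_10 {X : Type*} [NormedAddCommGroup X] [NormedSpace ℝ X] [CompleteSpace X]
    (x : ℕ → X) (hnorm : ∀ n, ‖x n‖ = 1)
    (htype : ∀ (y : X) (β₁ β₂ : ℝ), |β₁| + |β₂| ≠ 0 →
      ∃ (L : ℕ → ℝ) (l : ℝ),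
        (∀ m, Tendsto (fun n => ‖y + β₁ • x m + β₂ • x n‖) atTop (nhds (L m))) ∧
        Tendsto L atTop (nhds l) ∧
        Tendsto (fun m =>
          ‖(|β₁| / (|β₁| + |β₂|)) • y + β₁ • x m‖ +
          ‖(|β₂| / (|β₁| + |β₂|)) • y + β₂ • x m‖) atTop (nhds l))
    (ε : ℕ → ℝ) (hε : StrictAnti ε) (hε0 : Tendsto ε atTop (nhds 0))
    (hε1 : ∀ i, 0 < ε i ∧ ε i < 1) :
    ∃ n : ℕ → ℕ, StrictMono n ∧
      (∀ i₀ k, i₀ ≤ k → ∀ α : ℕ → ℝ,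
        (1 - ε i₀) * ∑ i ∈ Finset.Icc i₀ k, |α i| ≤
          ‖∑ i ∈ Finset.Icc i₀ k, α i • x (n i)‖) ∧
      ∃ A B : ℝ, 0 < A ∧ 0 < B ∧ ∀ (k : ℕ) (α : ℕ → ℝ),
        A * ∑ i ∈ Finset.range k, |α i| ≤ ‖∑ i ∈ Finset.range k, α i • x (n i)‖ ∧
        ‖∑ i ∈ Finset.range k, α i • x (n i)‖ ≤ B * ∑ i ∈ Finset.range k, |α i| :=
  stmt_10_general x hnorm htype ε hε hε1
end

section
/- If (x_n) is a seminormalized weakly null basic sequence in a Banach space X such that ‖∑_{n∈F} x_n‖ ≤ C for all finite F ⊆ ℕ (some constant C), then (x_n) is equivalent to the unit vector basis of c₀. -/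
/-!
The lower estimate only uses the basis constant: `α i • x i` is the difference of two
consecutive partial sums, each bounded by `K` times the full sum, and `‖x i‖ ≥ a`.
The upper estimate tests the sum against functionals `f`: splitting the indices according to
the sign of `f (x j)` bounds `∑ |f (x j)|` by two subset sums, each at most `C * ‖f‖`.
-/

open Filter Finset

theorem norm_le_two_mul_norm_sum_range_of_partialSum_le {X : Type*} [SeminormedAddCommGroup X]
    (y : ℕ → X) {K : ℝ} {k i : ℕ} (hi : i < k)
    (hpartial : ∀ m ≤ k, ‖∑ j ∈ range m, y j‖ ≤ K * ‖∑ j ∈ range k, y j‖) :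
    ‖y i‖ ≤ 2 * K * ‖∑ j ∈ range k, y j‖ :=
  calc ‖y i‖ = ‖∑ j ∈ range (i + 1), y j - ∑ j ∈ range i, y j‖ := by
        rw [sum_range_succ, add_sub_cancel_left]
    _ ≤ ‖∑ j ∈ range (i + 1), y j‖ + ‖∑ j ∈ range i, y j‖ := norm_sub_le _ _
    _ ≤ K * ‖∑ j ∈ range k, y j‖ + K * ‖∑ j ∈ range k, y j‖ :=
        add_le_add (hpartial _ hi) (hpartial _ hi.le)
    _ = 2 * K * ‖∑ j ∈ range k, y j‖ := by ring

section SubsetSums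

variable {X : Type*} [SeminormedAddCommGroup X] [NormedSpace ℝ X] {x : ℕ → X} {C : ℝ}

theorem sum_abs_apply_le_of_norm_sum_le (hC : ∀ F : Finset ℕ, ‖∑ n ∈ F, x n‖ ≤ C)
    (f : StrongDual ℝ X) (s : Finset ℕ) :
    ∑ j ∈ s, |f (x j)| ≤ 2 * C * ‖f‖ := by
  have hsubset (F : Finset ℕ) : |f (∑ n ∈ F, x n)| ≤ C * ‖f‖ := by
    rw [mul_comm]
    exact (f.le_opNorm _).trans (by gcongr; exact hC F)
  set P := s.filter (fun j => 0 ≤ f (x j))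
  set N := s.filter (fun j => ¬ 0 ≤ f (x j))
  have hP : ∑ j ∈ P, |f (x j)| = f (∑ j ∈ P, x j) := by
    rw [map_sum]
    exact sum_congr rfl fun j hj => abs_of_nonneg (mem_filter.mp hj).2
  have hN : ∑ j ∈ N, |f (x j)| = -f (∑ j ∈ N, x j) := by
    rw [map_sum, ← sum_neg_distrib]
    exact sum_congr rfl fun j hj => abs_of_neg (not_le.mp (mem_filter.mp hj).2)
  calc ∑ j ∈ s, |f (x j)| = f (∑ j ∈ P, x j) + -f (∑ j ∈ N, x j) := by
        rw [← sum_filter_add_sum_filter_not s (fun j => 0 ≤ f (x j)), hP, hN]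
    _ ≤ C * ‖f‖ + C * ‖f‖ :=
        add_le_add ((le_abs_self _).trans (hsubset _)) ((neg_le_abs _).trans (hsubset _))
    _ = 2 * C * ‖f‖ := by ring

theorem norm_sum_smul_le_of_norm_sum_le (hC : ∀ F : Finset ℕ, ‖∑ n ∈ F, x n‖ ≤ C)
    {α : ℕ → ℝ} {s : Finset ℕ} (hα : ∀ j ∈ s, |α j| ≤ 1) :
    ‖∑ j ∈ s, α j • x j‖ ≤ 2 * C := by
  have hC0 : 0 ≤ C := by simpa using hC ∅
  refine NormedSpace.norm_le_dual_bound ℝ _ (by positivity) fun f => ?_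
  calc ‖f (∑ j ∈ s, α j • x j)‖ = |∑ j ∈ s, α j * f (x j)| := by
        simp only [map_sum, map_smul, smul_eq_mul, Real.norm_eq_abs]
    _ ≤ ∑ j ∈ s, |α j| * |f (x j)| := by
        simpa only [abs_mul] using abs_sum_le_sum_abs (fun j => α j * f (x j)) s
    _ ≤ ∑ j ∈ s, |f (x j)| :=
        sum_le_sum fun j hj => mul_le_of_le_one_left (abs_nonneg _) (hα j hj)
    _ ≤ 2 * C * ‖f‖ := sum_abs_apply_le_of_norm_sum_le hC f s

end SubsetSums

theorem stmt_13_general {X : Type*} [NormedAddCommGroup X] [NormedSpace ℝ X]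
    (x : ℕ → X) (a b : ℝ) (ha : 0 < a)
    (hbound : ∀ n, a ≤ ‖x n‖ ∧ ‖x n‖ ≤ b)
    (K : ℝ) (hbasic : ∀ (m k : ℕ), m ≤ k → ∀ α : ℕ → ℝ,
      ‖∑ i ∈ Finset.range m, α i • x i‖ ≤ K * ‖∑ i ∈ Finset.range k, α i • x i‖)
    (C : ℝ) (hC : ∀ F : Finset ℕ, ‖∑ n ∈ F, x n‖ ≤ C) :
    ∃ A B : ℝ, 0 < A ∧ 0 < B ∧ ∀ (k : ℕ) (α : ℕ → ℝ),
      (∀ i < k, A * |α i| ≤ ‖∑ i ∈ Finset.range k, α i • x i‖) ∧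
      ((∀ i < k, |α i| ≤ 1) → ‖∑ i ∈ Finset.range k, α i • x i‖ ≤ B) := by
  have hC0 : 0 ≤ C := by simpa using hC ∅
  have hK : 0 < K := by
    have hx0 : 0 < ‖x 0‖ := ha.trans_le (hbound 0).1
    have h := hbasic 1 1 le_rfl (fun _ => 1)
    simp only [sum_range_one, one_smul] at h
    nlinarith
  refine ⟨a / (2 * K), 2 * C + 1, by positivity, by linarith, fun k α => ⟨fun i hi => ?_, ?_⟩⟩
  · have hlower : a * |α i| ≤ ‖α i • x i‖ := by
      rw [norm_smul, Real.norm_eq_abs, mul_comm]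
      exact mul_le_mul_of_nonneg_left (hbound i).1 (abs_nonneg _)
    have hupper := norm_le_two_mul_norm_sum_range_of_partialSum_le (fun j => α j • x j) hi
      fun m hm => hbasic m k hm α
    rw [div_mul_eq_mul_div, div_le_iff₀ (by positivity)]
    linarith
  · intro hα
    have := norm_sum_smul_le_of_norm_sum_le hC fun j hj => hα j (mem_range.mp hj)
    linarith

/-- A seminormalized weakly null basic sequence with uniformly bounded subset sums
is equivalent to the unit vector basis of c₀. -/
theorem stmt_13 {X : Type*} [NormedAddCommGroup X] [NormedSpace ℝ X] [CompleteSpace X]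
    (x : ℕ → X) (a b : ℝ) (ha : 0 < a)
    (hbound : ∀ n, a ≤ ‖x n‖ ∧ ‖x n‖ ≤ b)
    (K : ℝ) (hbasic : ∀ (m k : ℕ), m ≤ k → ∀ α : ℕ → ℝ,
      ‖∑ i ∈ Finset.range m, α i • x i‖ ≤ K * ‖∑ i ∈ Finset.range k, α i • x i‖)
    (hweak : ∀ f : X →L[ℝ] ℝ, Tendsto (fun n => f (x n)) atTop (nhds 0))
    (C : ℝ) (hC : ∀ F : Finset ℕ, ‖∑ n ∈ F, x n‖ ≤ C) :
    ∃ A B : ℝ, 0 < A ∧ 0 < B ∧ ∀ (k : ℕ) (α : ℕ → ℝ),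
      (∀ i < k, A * |α i| ≤ ‖∑ i ∈ Finset.range k, α i • x i‖) ∧
      ((∀ i < k, |α i| ≤ 1) → ‖∑ i ∈ Finset.range k, α i • x i‖ ≤ B) :=
  stmt_13_general x a b ha hbound K hbasic C hC
end
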